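/- For every integer k ≥ 1 and every n ≥ 0 there exist constants C > 0 and δ > 0 such that, for all ε ∈ (0, δ), |ρ_n^{(k)}(ε) − (1 − 2ε(n+1))| ≤ C ε²; i.e. the leading part of the expansion of ρ_n^{(k)} at ε = 0 is 1 − 2ε(n+1) + O(ε²). -/
import Mathlib


/-- The map `T` acting on sequences: `T(u)₀ = ε/(1+u₁)`,
`T(u)ₙ = ε(n+1)/(1 + u_{n-1} + u_{n+1})` for `n ≥ 1`. -/
noncomputable def Tmap (ε : ℝ) (u : ℕ → ℝ) : ℕ → ℝ
  | 0 => ε / (1 + u 1)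
  | (n+1) => ε * ((n : ℝ) + 2) / (1 + u n + u (n+2))

/-- Shifted bound sequences: `bnd ε k = b^{(k-1)}`, i.e. `bnd ε 0 = b^{(-1)} = 0`
and `bnd ε (k+1) = T (bnd ε k)`, so that `b^{(k)} = bnd ε (k+1)` for `k ≥ -1`. -/
noncomputable def bnd (ε : ℝ) : ℕ → ℕ → ℝ
  | 0 => fun _ => 0
  | (k+1) => Tmap ε (bnd ε k)

/-- Shifted rescaled bounds: `rho ε k n = ρ_n^{(k-1)} = b_n^{(k-1)}/(ε(n+1))`. -/
noncomputable def rho (ε : ℝ) (k n : ℕ) : ℝ := bnd ε k n / (ε * ((n : ℝ) + 1))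

/-- The differences `Δd ε k n = Δ_n^{(k)} = (-1)^k (ρ_n^{(k)} - ρ_n^{(k-1)})` for `k ≥ 0`. -/
noncomputable def Δd (ε : ℝ) (k n : ℕ) : ℝ := (-1 : ℝ)^k * (rho ε (k+1) n - rho ε k n)

lemma bnd_nonneg {ε : ℝ} (hε : 0 < ε) : ∀ k n, 0 ≤ bnd ε k n := by
  intro k
  induction k with
  | zero => intro n; simp [bnd]
  | succ k ih =>
    intro n
    match n with
    | 0 =>
      have h1 := ih 1
      show 0 ≤ ε / (1 + bnd ε k 1)
      exact div_nonneg hε.le (by linarith)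
    | (m+1) =>
      have h1 := ih m
      have h2 := ih (m+2)
      show 0 ≤ ε * ((m : ℝ) + 2) / (1 + bnd ε k m + bnd ε k (m+2))
      apply div_nonneg (by positivity) (by linarith)

lemma bnd_le {ε : ℝ} (hε : 0 < ε) (k n : ℕ) :
    bnd ε (k+1) n ≤ ε * ((n : ℝ) + 1) := by
  match n with
  | 0 =>
    show ε / (1 + bnd ε k 1) ≤ _
    have h := bnd_nonneg hε k 1
    have : ε / (1 + bnd ε k 1) ≤ ε := div_le_self hε.le (by linarith)
    simpa using this
  | (m+1) =>
    show ε * ((m : ℝ) + 2) / (1 + bnd ε k m + bnd ε k (m+2)) ≤ _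
    have h1 := bnd_nonneg hε k m
    have h2 := bnd_nonneg hε k (m+2)
    have hnum : (0:ℝ) ≤ ε * ((m : ℝ) + 2) := by positivity
    have : ε * ((m : ℝ) + 2) / (1 + bnd ε k m + bnd ε k (m+2)) ≤ ε * ((m : ℝ) + 2) :=
      div_le_self hnum (by linarith)
    push_cast
    linarith

lemma bnd_ge {ε : ℝ} (hε : 0 < ε) (k n : ℕ) :
    ε * ((n : ℝ) + 1) / (1 + 2 * ε * ((n : ℝ) + 1)) ≤ bnd ε (k+1) n := by
  have ha : (0:ℝ) ≤ ε * ((n : ℝ) + 1) := by positivity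
  have hd : (0:ℝ) < 1 + 2 * ε * ((n : ℝ) + 1) := by positivity
  match n with
  | 0 =>
    show _ ≤ ε / (1 + bnd ε k 1)
    have hub : bnd ε k 1 ≤ 2 * ε := by
      match k with
      | 0 => simp [bnd]; positivity
      | (j+1) =>
        have := bnd_le hε j 1
        push_cast at this ⊢; linarith
    have h0 := bnd_nonneg hε k 1
    have hdd : (0:ℝ) < 1 + bnd ε k 1 := by linarith
    have := div_le_div_of_nonneg_left hε.le hdd (by push_cast; linarith : 1 + bnd ε k 1 ≤ 1 + 2 * ε * ((0:ℕ) + 1 : ℝ))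
    simpa using this
  | (m+1) =>
    show _ ≤ ε * ((m : ℝ) + 2) / (1 + bnd ε k m + bnd ε k (m+2))
    have hub1 : bnd ε k m ≤ ε * ((m : ℝ) + 1) := by
      match k with
      | 0 => simp [bnd]; positivity
      | (j+1) => exact bnd_le hε j m
    have hub2 : bnd ε k (m+2) ≤ ε * ((m : ℝ) + 3) := by
      match k with
      | 0 => simp [bnd]; positivity
      | (j+1) =>
        have := bnd_le hε j (m+2); push_cast at this ⊢; linarith
    have h1 := bnd_nonneg hε k m
    have h2 := bnd_nonneg hε k (m+2)
    have hdd : (0:ℝ) < 1 + bnd ε k m + bnd ε k (m+2) := by linarith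
    have hnum : (0:ℝ) ≤ ε * ((m:ℝ) + 2) := by positivity
    have hle : 1 + bnd ε k m + bnd ε k (m+2) ≤ 1 + 2 * ε * (((m+1 : ℕ) : ℝ) + 1) := by
      push_cast; linarith
    have := div_le_div_of_nonneg_left hnum hdd hle
    push_cast at this ⊢
    ring_nf at this ⊢
    linarith

lemma bnd_ge' {ε : ℝ} (hε : 0 < ε) (k m : ℕ) :
    ε * ((m : ℝ) + 1) - 2 * ε^2 * ((m : ℝ) + 1)^2 ≤ bnd ε (k+1) m := by
  have h := bnd_ge hε k m
  have hd : (0:ℝ) < 1 + 2 * ε * ((m : ℝ) + 1) := by positivity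
  have key : ε * ((m : ℝ) + 1) - 2 * ε^2 * ((m : ℝ) + 1)^2
      ≤ ε * ((m : ℝ) + 1) / (1 + 2 * ε * ((m : ℝ) + 1)) := by
    rw [le_div_iff₀ hd]
    nlinarith [mul_nonneg (mul_nonneg hε.le hε.le) hε.le,
      pow_nonneg (by positivity : (0:ℝ) ≤ (m:ℝ)+1) 3]
  linarith

lemma key_lemma {ε x a : ℝ} (hε : 0 < ε) (ha : 0 ≤ a) (hx0 : 0 ≤ x)
    (hxu : x ≤ 2 * ε * a) (hxl : 2 * ε * a - 4 * ε^2 * (a+1)^2 ≤ x) :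
    |1 / (1 + x) - (1 - 2 * ε * a)| ≤ (4 * a^2 + 4 * (a+1)^2) * ε^2 := by
  have hx1 : (0:ℝ) < 1 + x := by linarith
  have hid : 1 / (1 + x) - (1 - 2 * ε * a) = x^2 / (1 + x) + (2 * ε * a - x) := by
    field_simp; ring
  have hnn : 0 ≤ x^2 / (1 + x) + (2 * ε * a - x) := by
    have := div_nonneg (sq_nonneg x) hx1.le
    linarith
  rw [hid, abs_of_nonneg hnn]
  have h1 : x^2 / (1 + x) ≤ x^2 := div_le_self (by positivity) (by linarith)
  have h2 : x^2 ≤ 4 * ε^2 * a^2 := by nlinarith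
  nlinarith

/-- The leading Taylor expansion of `ρ_n^{(k)}` at `ε = 0` is `1 - 2ε(n+1) + O(ε²)`,
for every `k ≥ 1`, `n ≥ 0`. -/
theorem statement6 (k n : ℕ) (hk : 1 ≤ k) :
    ∃ C > (0 : ℝ), ∃ δ > (0 : ℝ), ∀ ε : ℝ, 0 < ε → ε < δ →
      |rho ε (k+1) n - (1 - 2 * ε * ((n : ℝ) + 1))| ≤ C * ε^2 := by
  obtain ⟨j, rfl⟩ : ∃ j, k = j + 1 := ⟨k - 1, (Nat.succ_pred_eq_of_pos hk).symm⟩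
  set a : ℝ := (n : ℝ) + 1 with ha_def
  have ha : (0:ℝ) ≤ a := by positivity
  refine ⟨4 * a^2 + 4 * (a+1)^2, by positivity, 1, one_pos, ?_⟩
  intro ε hε _
  -- the sum of neighbor values
  have main : ∃ x : ℝ, rho ε (j+1+1) n = 1 / (1 + x) ∧ 0 ≤ x ∧ x ≤ 2 * ε * a ∧
      2 * ε * a - 4 * ε^2 * (a+1)^2 ≤ x := by
    match n with
    | 0 =>
      refine ⟨bnd ε (j+1) 1, ?_, bnd_nonneg hε _ _, ?_, ?_⟩
      · show ε / (1 + bnd ε (j+1) 1) / (ε * ((0:ℕ) + 1 : ℝ)) = _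
        have h0 := bnd_nonneg hε (j+1) 1
        have : (0:ℝ) < 1 + bnd ε (j+1) 1 := by linarith
        field_simp
        ring
      · have := bnd_le hε j 1
        simp only [ha_def]; push_cast at this ⊢; nlinarith
      · have := bnd_ge' hε j 1
        simp only [ha_def]; push_cast at this ⊢; nlinarith [sq_nonneg ε]
    | (m+1) =>
      refine ⟨bnd ε (j+1) m + bnd ε (j+1) (m+2), ?_, ?_, ?_, ?_⟩
      · show ε * ((m:ℝ) + 2) / (1 + bnd ε (j+1) m + bnd ε (j+1) (m+2)) / (ε * (((m+1:ℕ)) + 1 : ℝ)) = _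
        have h1 := bnd_nonneg hε (j+1) m
        have h2 := bnd_nonneg hε (j+1) (m+2)
        have hd : (0:ℝ) < 1 + bnd ε (j+1) m + bnd ε (j+1) (m+2) := by linarith
        push_cast
        rw [div_div]
        rw [div_eq_div_iff (by positivity) (by positivity)]
        ring
      · have h1 := bnd_nonneg hε (j+1) m
        have h2 := bnd_nonneg hε (j+1) (m+2)
        linarith
      · have h1 := bnd_le hε j m
        have h2 := bnd_le hε j (m+2)
        simp only [ha_def]; push_cast at h1 h2 ⊢; linarith
      · have h1 := bnd_ge' hε j m
        have h2 := bnd_ge' hε j (m+2)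
        simp only [ha_def]; push_cast at h1 h2 ⊢; nlinarith [sq_nonneg ε]
  obtain ⟨x, hx, hx0, hxu, hxl⟩ := main
  rw [hx]
  exact key_lemma hε ha hx0 hxu hxl
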